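/- arXiv:2308.02584 — 2 statements merged into one kernel-verified Lean document; each statement's English description precedes it below -/
import Mathlib

section
/- Let X be a finite set, φ¹, φ² : X → [0,1], and K a nonnegative integer. Define f(B) = max{ ∑_{x∈S} φ²(x) : S ⊆ B, |S| ≤ K } for B ⊆ X, F = max{ ∑_{x∈X} φ²(x)·y(x) : y : X → ℝ, 0 ≤ y(x) ≤ φ¹(x) for all x, ∑_{x∈X} y(x) ≤ K }, and G = max{ ∑_{B⊆X} f(B)·λ(B) : λ : 2^X → ℝ≥0, ∑_{B⊆X} λ(B) = 1, ∑_{B⊆X, x∈B} λ(B) = φ¹(x) for every x∈X }. Then F ≤ G. -/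
open scoped Classical
noncomputable section

/-- `max { ∑_{x ∈ S} φ x : S ⊆ s, |S| ≤ K }`. -/
def bestSum {α : Type*} (s : Finset α) (K : ℕ) (φ : α → ℝ) : ℝ :=
  (s.powerset.filter fun S => S.card ≤ K).sup' ⟨∅, by simp⟩ fun S => ∑ x ∈ S, φ x

/-!
Fix a feasible `y` of the relaxation. It lies in the polytope `{0 ≤ y ≤ 1, ∑ y ≤ K}`, whose
extreme points are the indicators of sets of size at most `K`: a point with two fractional
coordinates `x, x'` moves both ways along `e_x - e_x'`, and a point with a single fractional
coordinate has a non-integral sum, hence slack below `K`. By Krein–Milman, `y` is then the marginal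
vector of a distribution on sets of size at most `K`, whose expected `bestSum` is at least
`∑ φ² y`. Finally the marginals are raised from `y` to `φ¹` one coordinate `a` at a time, by mixing
with the pushforward under `insert a`; since `bestSum` is monotone the expectation never drops.
-/

open Finset Function

section BestSum
variable {α : Type*} {s t : Finset α} {K : ℕ} {φ : α → ℝ}

theorem sum_le_bestSum (hs : s.card ≤ K) : ∑ x ∈ s, φ x ≤ bestSum s K φ :=
  le_sup' (fun S => ∑ x ∈ S, φ x) (by simp [hs])

theorem bestSum_mono (hst : s ⊆ t) : bestSum s K φ ≤ bestSum t K φ :=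
  sup'_le _ _ fun S hS => by
    rw [mem_filter, mem_powerset] at hS
    exact le_sup' (fun S => ∑ x ∈ S, φ x) (by simp [hS.2, hS.1.trans hst])

theorem bestSum_le_sum_abs [Fintype α] : bestSum s K φ ≤ ∑ x, |φ x| :=
  sup'_le _ _ fun S _ => calc
    ∑ x ∈ S, φ x ≤ ∑ x ∈ S, |φ x| := sum_le_sum fun x _ => le_abs_self (φ x)
    _ ≤ ∑ x, |φ x| := sum_le_univ_sum_of_nonneg fun x => abs_nonneg (φ x)

theorem sum_bestSum_mul_le_sum_abs [Fintype α] (K : ℕ) (φ : α → ℝ) {lam : Finset α → ℝ}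
    (hlam : ∀ B, 0 ≤ lam B) (hsum : ∑ B, lam B = 1) :
    ∑ B, bestSum B K φ * lam B ≤ ∑ x, |φ x| :=
  calc ∑ B, bestSum B K φ * lam B ≤ ∑ B, (∑ x, |φ x|) * lam B :=
        sum_le_sum fun B _ => mul_le_mul_of_nonneg_right bestSum_le_sum_abs (hlam B)
    _ = ∑ x, |φ x| := by rw [← mul_sum, hsum, mul_one]

end BestSum

theorem sum_mul_sum_fiber {α β : Type*} [Fintype α] [Fintype β] [DecidableEq β]
    (e : α → β) (g : β → ℝ) (μ : α → ℝ) :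
    ∑ b, g b * ∑ a with e a = b, μ a = ∑ a, g (e a) * μ a := by
  rw [← sum_fiberwise univ e fun a => g (e a) * μ a]
  refine sum_congr rfl fun b _ => ?_
  rw [mul_sum]
  exact sum_congr rfl fun a ha => by rw [(mem_filter.1 ha).2]

theorem sum_eq_card_filter_of_forall_eq_zero_or_eq_one {α : Type*} {s : Finset α} {y : α → ℝ}
    (hy : ∀ x ∈ s, y x = 0 ∨ y x = 1) : ∑ x ∈ s, y x = #{x ∈ s | y x = 1} := by
  rw [← sum_boole]
  refine sum_congr rfl fun x hx => ?_
  rcases hy x hx with h | h <;> simp [h]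

theorem eq_zero_of_add_mem_of_sub_mem_of_mem_extremePoints {𝕜 E : Type*} [Field 𝕜] [LinearOrder 𝕜]
    [IsStrictOrderedRing 𝕜] [AddCommGroup E] [Module 𝕜 E] {s : Set E} {y d : E}
    (hy : y ∈ s.extremePoints 𝕜) (hadd : y + d ∈ s) (hsub : y - d ∈ s) : d = 0 := by
  have hseg : y ∈ openSegment 𝕜 (y + d) (y - d) :=
    ⟨1 / 2, 1 / 2, by norm_num, by norm_num, by norm_num, by module⟩
  simpa using hy.2 hadd hsub hseg

section Distributions
variable {X : Type*} [Fintype X]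

structure IsDistribWithMarginals (lam : Finset X → ℝ) (p : X → ℝ) : Prop where
  nonneg : ∀ B, 0 ≤ lam B
  sum_eq_one : ∑ B, lam B = 1
  marginal_eq : ∀ x, ∑ B ∈ univ.filter (fun B : Finset X => x ∈ B), lam B = p x

namespace IsDistribWithMarginals
variable {lam lam₁ lam₂ : Finset X → ℝ} {p p₁ p₂ : X → ℝ}

theorem combo (h₁ : IsDistribWithMarginals lam₁ p₁) (h₂ : IsDistribWithMarginals lam₂ p₂)
    {a b : ℝ} (ha : 0 ≤ a) (hb : 0 ≤ b) (hab : a + b = 1) :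
    IsDistribWithMarginals (a • lam₁ + b • lam₂) (a • p₁ + b • p₂) where
  nonneg B := add_nonneg (mul_nonneg ha (h₁.nonneg B)) (mul_nonneg hb (h₂.nonneg B))
  sum_eq_one := by
    simp only [Pi.add_apply, Pi.smul_apply, smul_eq_mul, sum_add_distrib, ← mul_sum,
      h₁.sum_eq_one, h₂.sum_eq_one, mul_one, hab]
  marginal_eq x := by
    simp only [Pi.add_apply, Pi.smul_apply, smul_eq_mul, sum_add_distrib, ← mul_sum,
      h₁.marginal_eq, h₂.marginal_eq]

theorem single (S : Finset X) :
    IsDistribWithMarginals (Pi.single S 1) ((S : Set X).indicator 1) where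
  nonneg B := by by_cases h : B = S <;> simp [h]
  sum_eq_one := by simp
  marginal_eq x := by simp [sum_pi_single', Set.indicator_apply]

theorem map_insert (h : IsDistribWithMarginals lam p) (a : X) :
    IsDistribWithMarginals (fun B => ∑ A with insert a A = B, lam A) (update p a 1) where
  nonneg B := sum_nonneg fun A _ => h.nonneg A
  sum_eq_one := by rw [sum_fiberwise]; exact h.sum_eq_one
  marginal_eq x := by
    have := sum_mul_sum_fiber (insert a) (fun B => if x ∈ B then 1 else 0) lam
    simp only [boole_mul, ← sum_filter] at this
    rw [this]
    rcases eq_or_ne x a with rfl | hx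
    · simpa using h.sum_eq_one
    · simpa [hx] using h.marginal_eq x

end IsDistribWithMarginals

end Distributions

section Achievable
variable {X : Type*} [Fintype X] {K : ℕ} {φ : X → ℝ} {y p q : X → ℝ}

def Achievable (K : ℕ) (φ : X → ℝ) (y p : X → ℝ) : Prop :=
  ∃ lam, IsDistribWithMarginals lam p ∧ ∑ x, φ x * y x ≤ ∑ B, bestSum B K φ * lam B

theorem Achievable.combo {y₁ y₂ p₁ p₂ : X → ℝ} (h₁ : Achievable K φ y₁ p₁)
    (h₂ : Achievable K φ y₂ p₂) {a b : ℝ} (ha : 0 ≤ a) (hb : 0 ≤ b) (hab : a + b = 1) :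
    Achievable K φ (a • y₁ + b • y₂) (a • p₁ + b • p₂) := by
  obtain ⟨lam₁, hlam₁, hv₁⟩ := h₁
  obtain ⟨lam₂, hlam₂, hv₂⟩ := h₂
  refine ⟨a • lam₁ + b • lam₂, hlam₁.combo hlam₂ ha hb hab, ?_⟩
  simp only [Pi.add_apply, Pi.smul_apply, smul_eq_mul, mul_add, sum_add_distrib,
    mul_left_comm _ a, mul_left_comm _ b, ← mul_sum]
  exact add_le_add (mul_le_mul_of_nonneg_left hv₁ ha) (mul_le_mul_of_nonneg_left hv₂ hb)

theorem convex_setOf_achievable_self : Convex ℝ {y : X → ℝ | Achievable K φ y y} :=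
  fun _ hy _ hz _ _ ha hb hab => hy.combo hz ha hb hab

theorem convex_setOf_achievable (y : X → ℝ) : Convex ℝ {p : X → ℝ | Achievable K φ y p} :=
  fun _ hp _ hq _ _ ha hb hab => Convex.combo_self hab y ▸ hp.combo hq ha hb hab

theorem achievable_indicator {S : Finset X} (hS : S.card ≤ K) :
    Achievable K φ ((S : Set X).indicator 1) ((S : Set X).indicator 1) :=
  ⟨Pi.single S 1, .single S, by
    simpa [Set.indicator_apply, Pi.single_apply] using sum_le_bestSum hS⟩

theorem Achievable.update_one (h : Achievable K φ y p) (a : X) :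
    Achievable K φ y (update p a 1) := by
  obtain ⟨lam, hlam, hv⟩ := h
  refine ⟨_, hlam.map_insert a, hv.trans ?_⟩
  rw [sum_mul_sum_fiber]
  exact sum_le_sum fun A _ =>
    mul_le_mul_of_nonneg_right (bestSum_mono (subset_insert a A)) (hlam.nonneg A)

theorem Achievable.update_of_le (h : Achievable K φ y p) {a : X} {t : ℝ} (hpt : p a ≤ t)
    (ht : t ≤ 1) : Achievable K φ y (update p a t) := by
  rcases hpt.eq_or_lt with rfl | hlt
  · rwa [update_eq_self]
  have hpos : 0 < 1 - p a := by linarith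
  have hmix : update p a t =
      ((1 - t) / (1 - p a)) • p + ((t - p a) / (1 - p a)) • update p a 1 := by
    ext x
    rcases eq_or_ne x a with rfl | hx
    · simp only [Pi.add_apply, Pi.smul_apply, smul_eq_mul, update_self]
      field_simp
      ring
    · simp only [Pi.add_apply, Pi.smul_apply, smul_eq_mul, update_of_ne hx]
      field_simp
      ring
  rw [hmix]
  exact convex_setOf_achievable y h (h.update_one a) (div_nonneg (by linarith) hpos.le)
    (div_nonneg (by linarith) hpos.le) (by field_simp; ring)

theorem Achievable.mono_right (h : Achievable K φ y p) (hpq : p ≤ q) (hq : q ≤ 1) :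
    Achievable K φ y q := by
  suffices ∀ T : Finset X, Achievable K φ y (T.piecewise q p) by simpa using this univ
  intro T
  induction T using Finset.induction_on with
  | empty => simpa
  | insert a T ha ih =>
    rw [piecewise_insert]
    exact ih.update_of_le (by rw [piecewise_eq_of_notMem _ _ _ ha]; exact hpq a) (hq a)

end Achievable

section CappedCube
variable {X : Type*} [Fintype X] {K : ℕ}

def cappedCube (K : ℕ) : Set (X → ℝ) := Set.Icc 0 1 ∩ {y | ∑ x, y x ≤ K}

theorem isCompact_cappedCube : IsCompact (cappedCube (X := X) K) :=
  isCompact_Icc.inter_right (isClosed_le (by fun_prop) continuous_const)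

theorem convex_cappedCube : Convex ℝ (cappedCube (X := X) K) :=
  (convex_Icc 0 1).inter <| convex_halfSpace_le
    ⟨fun _ _ => sum_add_distrib, fun _ _ => (mul_sum _ _ _).symm⟩ _

theorem add_mem_cappedCube {y d : X → ℝ}
    (hd : ∀ x, |d x| ≤ min (y x) (1 - y x)) (hsum : |∑ x, d x| ≤ K - ∑ x, y x) :
    y + d ∈ cappedCube K := by
  refine ⟨⟨fun x => ?_, fun x => ?_⟩, ?_⟩
  · have := (abs_le.1 ((hd x).trans (min_le_left _ _))).1
    simp only [Pi.zero_apply, Pi.add_apply]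
    linarith
  · have := (abs_le.1 ((hd x).trans (min_le_right _ _))).2
    simp only [Pi.one_apply, Pi.add_apply]
    linarith
  · have := (abs_le.1 hsum).2
    show ∑ x, (y x + d x) ≤ K
    rw [sum_add_distrib]
    linarith

theorem sum_lt_of_forall_ne_eq_zero_or_eq_one {y : X → ℝ} (hy : y ∈ cappedCube K) {x : X}
    (hx : 0 < y x) (hx1 : y x < 1) (hint : ∀ x' ≠ x, y x' = 0 ∨ y x' = 1) :
    ∑ x', y x' < K := by
  have hN : ∑ x' ∈ univ.erase x, y x' = #{x' ∈ univ.erase x | y x' = 1} :=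
    sum_eq_card_filter_of_forall_eq_zero_or_eq_one fun x' hx' => hint x' (ne_of_mem_erase hx')
  have hsplit := add_sum_erase univ y (mem_univ x)
  have hyK : ∑ x', y x' ≤ K := hy.2
  have hK : (#{x' ∈ univ.erase x | y x' = 1} : ℝ) < K := by linarith
  have hK' : (#{x' ∈ univ.erase x | y x' = 1} + 1 : ℝ) ≤ K := by exact_mod_cast hK
  linarith

theorem exists_perturbation_cappedCube {y : X → ℝ} (hy : y ∈ cappedCube K) {x : X}
    (hx : y x ≠ 0 ∧ y x ≠ 1) : ∃ d : X → ℝ, (∀ x', |d x'| ≤ min (y x') (1 - y x')) ∧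
      |∑ x', d x'| ≤ K - ∑ x', y x' ∧ d x ≠ 0 := by
  have hy0 : ∀ x', 0 ≤ y x' := hy.1.1
  have hy1 : ∀ x', y x' ≤ 1 := hy.1.2
  set slack : X → ℝ := fun x' => min (y x') (1 - y x')
  have hslack : ∀ x', 0 ≤ slack x' := fun x' => le_min (hy0 x') (by linarith [hy1 x'])
  have hfrac : ∀ x', y x' ≠ 0 ∧ y x' ≠ 1 → 0 < slack x' := fun x' h =>
    lt_min ((hy0 x').lt_of_ne' h.1) (by linarith [(hy1 x').lt_of_ne h.2])
  show ∃ d : X → ℝ, (∀ x', |d x'| ≤ slack x') ∧ _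
  by_cases h : ∃ x₁ ≠ x, y x₁ ≠ 0 ∧ y x₁ ≠ 1
  · obtain ⟨x₁, hx₁, hfrac₁⟩ := h
    set e := min (slack x) (slack x₁)
    have he : 0 < e := lt_min (hfrac x hx) (hfrac x₁ hfrac₁)
    refine ⟨Pi.single x e - Pi.single x₁ e, fun x' => ?_, ?_, by simp [hx₁.symm, he.ne']⟩
    · rcases eq_or_ne x' x with rfl | h'
      · simp [hx₁.symm, abs_of_pos he, e]
      rcases eq_or_ne x' x₁ with rfl | h₁
      · simp [h', abs_of_pos he, e]
      · simp [h', h₁, hslack x']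
    · simp only [Pi.sub_apply, sum_sub_distrib, sum_pi_single', mem_univ, if_true, sub_self,
        abs_zero, sub_nonneg]
      exact hy.2
  · push Not at h
    have hlt := sum_lt_of_forall_ne_eq_zero_or_eq_one hy ((hy0 x).lt_of_ne' hx.1)
      ((hy1 x).lt_of_ne hx.2) fun x' hx' => or_iff_not_imp_left.2 (h x' hx')
    set e := min (slack x) (K - ∑ x', y x')
    have he : 0 < e := lt_min (hfrac x hx) (by linarith)
    refine ⟨Pi.single x e, fun x' => ?_, by simp [abs_of_pos he, e], by simp [he.ne']⟩
    rcases eq_or_ne x' x with rfl | h'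
    · simp [abs_of_pos he, e]
    · simp [h', hslack x']

theorem eq_zero_or_eq_one_of_mem_extremePoints_cappedCube {y : X → ℝ}
    (hy : y ∈ (cappedCube K).extremePoints ℝ) (x : X) : y x = 0 ∨ y x = 1 := by
  by_contra! hx
  obtain ⟨d, hd, hsum, hdx⟩ := exists_perturbation_cappedCube hy.1 hx
  have hadd := add_mem_cappedCube hd hsum
  have hsub := add_mem_cappedCube (d := -d) (by simpa only [Pi.neg_apply, abs_neg] using hd)
    (by simpa only [Pi.neg_apply, sum_neg_distrib, abs_neg] using hsum)
  rw [← sub_eq_add_neg] at hsub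
  exact hdx (congrFun (eq_zero_of_add_mem_of_sub_mem_of_mem_extremePoints hy hadd hsub) x)

theorem extremePoints_cappedCube_subset :
    (cappedCube K).extremePoints ℝ ⊆
      (fun S : Finset X => (S : Set X).indicator (1 : X → ℝ)) '' {S | S.card ≤ K} := by
  intro y hy
  have h01 := eq_zero_or_eq_one_of_mem_extremePoints_cappedCube hy
  refine ⟨univ.filter fun x => y x = 1, ?_, ?_⟩
  · have : ∑ x, y x ≤ K := hy.1.2
    rw [sum_eq_card_filter_of_forall_eq_zero_or_eq_one fun x _ => h01 x] at this
    exact_mod_cast this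
  · ext x
    rcases h01 x with h | h <;> simp [h]

theorem cappedCube_subset_convexHull :
    cappedCube K ⊆
      convexHull ℝ ((fun S : Finset X => (S : Set X).indicator (1 : X → ℝ)) '' {S | S.card ≤ K}) :=
  calc cappedCube K = closure (convexHull ℝ ((cappedCube K).extremePoints ℝ)) :=
        (closure_convexHull_extremePoints isCompact_cappedCube convex_cappedCube).symm
    _ ⊆ closure (convexHull ℝ _) := closure_mono (convexHull_mono extremePoints_cappedCube_subset)
    _ = _ := ((Set.toFinite _).isClosed_convexHull (𝕜 := ℝ)).closure_eq

end CappedCube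

theorem achievable_self_of_mem_cappedCube {X : Type*} [Fintype X] {K : ℕ} {φ : X → ℝ}
    {y : X → ℝ} (hy : y ∈ cappedCube K) : Achievable K φ y y :=
  convexHull_min (by rintro _ ⟨S, hS, rfl⟩; exact achievable_indicator hS)
    convex_setOf_achievable_self (cappedCube_subset_convexHull hy)

theorem F_le_G_general {X : Type*} [Fintype X] (φ1 φ2 : X → ℝ)
    (hφ1 : ∀ x, 0 ≤ φ1 x ∧ φ1 x ≤ 1) (K : ℕ) :
    sSup { v : ℝ | ∃ y : X → ℝ,
        (∀ x, 0 ≤ y x ∧ y x ≤ φ1 x) ∧ (∑ x, y x) ≤ (K : ℝ) ∧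
        v = ∑ x, φ2 x * y x } ≤
    sSup { v : ℝ | ∃ lam : Finset X → ℝ,
        (∀ B, 0 ≤ lam B) ∧ (∑ B : Finset X, lam B) = 1 ∧
        (∀ x : X,
          (∑ B ∈ Finset.univ.filter (fun B : Finset X => x ∈ B), lam B) = φ1 x) ∧
        v = ∑ B : Finset X, bestSum B K φ2 * lam B } := by
  refine csSup_le ⟨0, 0, fun x => ⟨le_rfl, (hφ1 x).1⟩, by simp, by simp⟩ ?_
  rintro _ ⟨y, hy, hyK, rfl⟩
  have hyCube : y ∈ cappedCube K :=
    ⟨⟨fun x => (hy x).1, fun x => (hy x).2.trans (hφ1 x).2⟩, hyK⟩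
  obtain ⟨lam, hlam, hval⟩ := (achievable_self_of_mem_cappedCube hyCube).mono_right
    (fun x => (hy x).2) (fun x => (hφ1 x).2)
  refine hval.trans (le_csSup ⟨∑ x, |φ2 x|, ?_⟩
    ⟨lam, hlam.nonneg, hlam.sum_eq_one, hlam.marginal_eq, rfl⟩)
  rintro _ ⟨lam, hlam, hsum, -, rfl⟩
  exact sum_bestSum_mul_le_sum_abs K φ2 hlam hsum

/-- the per-user DH relaxation value `F` is at most the per-user
distribution-problem value `G`. -/
theorem F_le_G {X : Type*} [Fintype X] (φ1 φ2 : X → ℝ)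
    (hφ1 : ∀ x, 0 ≤ φ1 x ∧ φ1 x ≤ 1) (hφ2 : ∀ x, 0 ≤ φ2 x ∧ φ2 x ≤ 1) (K : ℕ) :
    sSup { v : ℝ | ∃ y : X → ℝ,
        (∀ x, 0 ≤ y x ∧ y x ≤ φ1 x) ∧ (∑ x, y x) ≤ (K : ℝ) ∧
        v = ∑ x, φ2 x * y x } ≤
    sSup { v : ℝ | ∃ lam : Finset X → ℝ,
        (∀ B, 0 ≤ lam B) ∧ (∑ B : Finset X, lam B) = 1 ∧
        (∀ x : X,
          (∑ B ∈ Finset.univ.filter (fun B : Finset X => x ∈ B), lam B) = φ1 x) ∧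
        v = ∑ B : Finset X, bestSum B K φ2 * lam B } :=
  F_le_G_general φ1 φ2 hφ1 K
end
end

section
/- Let X be a finite set, φ¹, φ² : X → [0,1], K a nonnegative integer, and f(B) = max{ ∑_{x∈S} φ²(x) : S ⊆ B, |S| ≤ K } for B ⊆ X. Consider the linear program D: minimize θ + ∑_{x∈X} φ¹(x)·γ(x) over θ ∈ ℝ and γ : X → ℝ subject to θ + ∑_{x∈B} γ(x) ≥ f(B) for every B ⊆ X. Then the optimal value of D equals the optimal value of the restricted program: minimize θ + ∑_{x∈X} φ¹(x)·γ(x) over θ ≥ 0 and γ : X → ℝ≥0 subject to θ + ∑_{x∈B} γ(x) ≥ ∑_{x∈B} φ²(x) for every B ⊆ X with |B| ≤ K. -/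
open scoped Classical
noncomputable section

lemma sum_le_bestSum_s12 {α : Type*} {s S : Finset α} {K : ℕ} {φ : α → ℝ}
    (hS : S ⊆ s) (hK : S.card ≤ K) : ∑ x ∈ S, φ x ≤ bestSum s K φ := by
  unfold bestSum
  exact Finset.le_sup' (fun S => ∑ x ∈ S, φ x)
    (by simp [Finset.mem_filter, Finset.mem_powerset, hS, hK])

lemma bestSum_nonneg {α : Type*} (s : Finset α) (K : ℕ) (φ : α → ℝ) :
    0 ≤ bestSum s K φ := by
  simpa using sum_le_bestSum_s12 (S := (∅ : Finset α)) (s := s) (K := K) (φ := φ)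
    (Finset.empty_subset s) (by simp)

lemma bestSum_le {α : Type*} {s : Finset α} {K : ℕ} {φ : α → ℝ} {c : ℝ}
    (h : ∀ S ⊆ s, S.card ≤ K → ∑ x ∈ S, φ x ≤ c) : bestSum s K φ ≤ c := by
  unfold bestSum
  refine Finset.sup'_le _ _ fun S hS => ?_
  simp only [Finset.mem_filter, Finset.mem_powerset] at hS
  exact h S hS.1 hS.2

lemma transform {X : Type*} [Fintype X] (φ1 φ2 : X → ℝ)
    (hφ1 : ∀ x, 0 ≤ φ1 x ∧ φ1 x ≤ 1) (hφ2 : ∀ x, 0 ≤ φ2 x ∧ φ2 x ≤ 1) (K : ℕ)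
    (θ : ℝ) (γ : X → ℝ)
    (hfeas : ∀ B : Finset X, bestSum B K φ2 ≤ θ + ∑ x ∈ B, γ x) :
    ∃ (θ' : ℝ) (γ' : X → ℝ), 0 ≤ θ' ∧ (∀ x, 0 ≤ γ' x) ∧
      (∀ B : Finset X, B.card ≤ K → (∑ x ∈ B, φ2 x) ≤ θ' + ∑ x ∈ B, γ' x) ∧
      θ' + ∑ x, φ1 x * γ' x ≤ θ + ∑ x, φ1 x * γ x := by
  set N := Finset.univ.filter (fun x : X => γ x < 0) with hN
  refine ⟨θ + ∑ x ∈ N, γ x, fun x => max (γ x) 0, ?_, fun x => le_max_right _ _, ?_, ?_⟩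
  · have h1 := hfeas N
    have h0 := bestSum_nonneg N K φ2
    linarith
  · intro B hB
    have h1 : ∑ x ∈ B, φ2 x ≤ bestSum (B ∪ N) K φ2 :=
      sum_le_bestSum_s12 Finset.subset_union_left hB
    have h2 := hfeas (B ∪ N)
    have h3 : ∑ x ∈ B ∪ N, γ x = ∑ x ∈ B \ N, γ x + ∑ x ∈ N, γ x := by
      rw [← Finset.sum_union Finset.sdiff_disjoint, Finset.sdiff_union_self_eq_union]
    have h4 : ∑ x ∈ B \ N, γ x ≤ ∑ x ∈ B, max (γ x) 0 :=
      calc ∑ x ∈ B \ N, γ x ≤ ∑ x ∈ B \ N, max (γ x) 0 :=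
            Finset.sum_le_sum fun x _ => le_max_left _ _
        _ ≤ ∑ x ∈ B, max (γ x) 0 :=
            Finset.sum_le_sum_of_subset_of_nonneg Finset.sdiff_subset
              (fun x _ _ => le_max_right _ _)
    linarith
  · have h5 : ∑ x, φ1 x * max (γ x) 0 - ∑ x, φ1 x * γ x
        = ∑ x, φ1 x * (max (γ x) 0 - γ x) := by
      rw [← Finset.sum_sub_distrib]
      exact Finset.sum_congr rfl fun x _ => by ring
    have h6 : ∑ x, φ1 x * (max (γ x) 0 - γ x) ≤ ∑ x, (max (γ x) 0 - γ x) :=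
      Finset.sum_le_sum fun x _ => by
        have hd : 0 ≤ max (γ x) 0 - γ x := by
          have := le_max_left (γ x) 0; linarith
        nlinarith [(hφ1 x).1, (hφ1 x).2]
    have h7 : ∑ x, (max (γ x) 0 - γ x) = ∑ x ∈ N, (- γ x) := by
      rw [← Finset.sum_subset (Finset.subset_univ N)]
      · refine Finset.sum_congr rfl fun x hx => ?_
        simp only [hN, Finset.mem_filter] at hx
        rw [max_eq_right hx.2.le]; ring
      · intro x _ hx
        simp only [hN, Finset.mem_filter, Finset.mem_univ, true_and, not_lt] at hx
        rw [max_eq_left hx]; ring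
    have h8 : ∑ x ∈ N, (- γ x) = - ∑ x ∈ N, γ x := by rw [Finset.sum_neg_distrib]
    linarith

/-- the dual `D` of the per-user distribution problem has the same optimal
value as its restriction to nonnegative variables and to constraints indexed by sets of
cardinality at most `K` (with right-hand side `∑_{x∈B} φ² x`). -/
theorem dual_eq_restricted_dual {X : Type*} [Fintype X] (φ1 φ2 : X → ℝ)
    (hφ1 : ∀ x, 0 ≤ φ1 x ∧ φ1 x ≤ 1) (hφ2 : ∀ x, 0 ≤ φ2 x ∧ φ2 x ≤ 1) (K : ℕ) :
    sInf { v : ℝ | ∃ (θ : ℝ) (γ : X → ℝ),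
        (∀ B : Finset X, bestSum B K φ2 ≤ θ + ∑ x ∈ B, γ x) ∧
        v = θ + ∑ x, φ1 x * γ x } =
    sInf { v : ℝ | ∃ (θ : ℝ) (γ : X → ℝ),
        0 ≤ θ ∧ (∀ x, 0 ≤ γ x) ∧
        (∀ B : Finset X, B.card ≤ K → (∑ x ∈ B, φ2 x) ≤ θ + ∑ x ∈ B, γ x) ∧
        v = θ + ∑ x, φ1 x * γ x } := by
  set Sfull := { v : ℝ | ∃ (θ : ℝ) (γ : X → ℝ),
      (∀ B : Finset X, bestSum B K φ2 ≤ θ + ∑ x ∈ B, γ x) ∧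
      v = θ + ∑ x, φ1 x * γ x } with hSfull
  set Sres := { v : ℝ | ∃ (θ : ℝ) (γ : X → ℝ),
      0 ≤ θ ∧ (∀ x, 0 ≤ γ x) ∧
      (∀ B : Finset X, B.card ≤ K → (∑ x ∈ B, φ2 x) ≤ θ + ∑ x ∈ B, γ x) ∧
      v = θ + ∑ x, φ1 x * γ x } with hSres
  -- restricted feasible points are feasible for the full problem
  have hsub : Sres ⊆ Sfull := by
    rintro v ⟨θ, γ, hθ, hγ, hc, hv⟩
    refine ⟨θ, γ, fun B => bestSum_le fun S hS hK => ?_, hv⟩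
    have h1 := hc S hK
    have h2 : ∑ x ∈ S, γ x ≤ ∑ x ∈ B, γ x :=
      Finset.sum_le_sum_of_subset_of_nonneg hS (fun x _ _ => hγ x)
    linarith
  -- nonnegativity lower bound for restricted values
  have hres_nonneg : ∀ v ∈ Sres, (0 : ℝ) ≤ v := by
    rintro v ⟨θ, γ, hθ, hγ, hc, hv⟩
    have : (0 : ℝ) ≤ ∑ x, φ1 x * γ x :=
      Finset.sum_nonneg fun x _ => mul_nonneg (hφ1 x).1 (hγ x)
    linarith [hv ▸ (by linarith : (0:ℝ) ≤ θ + ∑ x, φ1 x * γ x)]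
  have hbdd_res : BddBelow Sres := ⟨0, fun v hv => hres_nonneg v hv⟩
  -- every full value dominates some restricted value
  have hdom : ∀ v ∈ Sfull, ∃ v' ∈ Sres, v' ≤ v := by
    rintro v ⟨θ, γ, hfeas, hv⟩
    obtain ⟨θ', γ', h0, h1, h2, h3⟩ := transform φ1 φ2 hφ1 hφ2 K θ γ hfeas
    exact ⟨θ' + ∑ x, φ1 x * γ' x, ⟨θ', γ', h0, h1, h2, rfl⟩, hv ▸ h3⟩
  have hbdd_full : BddBelow Sfull := by
    refine ⟨0, fun v hv => ?_⟩
    obtain ⟨v', hv', hle⟩ := hdom v hv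
    exact le_trans (hres_nonneg v' hv') hle
  -- a common feasible point
  have hne_res : Sres.Nonempty := by
    refine ⟨∑ x, φ2 x, ∑ x, φ2 x, fun _ => 0, ?_, fun _ => le_rfl, ?_, by simp⟩
    · exact Finset.sum_nonneg fun x _ => (hφ2 x).1
    · intro B _
      have : ∑ x ∈ B, φ2 x ≤ ∑ x, φ2 x :=
        Finset.sum_le_sum_of_subset_of_nonneg (Finset.subset_univ B)
          (fun x _ _ => (hφ2 x).1)
      simpa using this
  have hne_full : Sfull.Nonempty := hne_res.mono hsub
  refine le_antisymm (csInf_le_csInf hbdd_full hne_res hsub) ?_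
  refine le_csInf hne_full fun v hv => ?_
  obtain ⟨v', hv', hle⟩ := hdom v hv
  exact le_trans (csInf_le hbdd_res hv') hle
end
end
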